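/- The quadratic form G̃(V, t) = -(λ̃/2)(tr V)² - μ̃·tr(V²) - α⁽⁴⁷⁾(tr V)t - (1/2)(a⁽⁴⁴⁾ + γ/β²)t² on symmetric 3×3 matrices V and scalars t (with E = 0) is positive definite if and only if μ̃ < 0, 3λ̃ + 2μ̃ < 0, a⁽⁴⁴⁾ + γ/β² < 0, and (3λ̃ + 2μ̃)(a⁽⁴⁴⁾ + γ/β²) > 3(α⁽⁴⁷⁾)². -/

import Mathlib

open Matrix

/-
Writing s = tr V and K = a⁽⁴⁴⁾ + γ/β², the form splits as
  G̃(V, t) = -μ̃ (tr(V²) - s²/3) + [-(3λ̃ + 2μ̃)/6 · s² - α⁽⁴⁷⁾ s t - K/2 · t²].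
For symmetric V, tr(V²) is the sum of squares of the entries, so by Cauchy–Schwarz the first
bracket is nonnegative; it vanishes on scalar matrices and equals 2 at V = diag(1, -1, 0). The
second summand is a binary quadratic form in (s, t), and the scalar matrices V = (s/3)·1 realise
all of its values. Hence G̃ is positive definite iff μ̃ < 0 and the binary form is positive
definite, which is the discriminant condition.
-/

theorem binary_quadratic_pos_iff {A B C : ℝ} :
    (∀ s t : ℝ, ¬(s = 0 ∧ t = 0) → 0 < A * s^2 + B * s * t + C * t^2) ↔
      0 < A ∧ 0 < C ∧ B^2 < 4 * A * C := by
  constructor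
  · intro h
    have hA : 0 < A := by simpa using h 1 0 (by simp)
    have hC : 0 < C := by simpa using h 0 1 (by simp)
    -- at (B, -2A) the form equals A (4AC - B²)
    have hBA := h B (-2 * A) (fun h0 => hA.ne' (by linarith [h0.2]))
    refine ⟨hA, hC, ?_⟩
    nlinarith
  · rintro ⟨hA, hC, hD⟩ s t hst
    rcases eq_or_ne t 0 with rfl | ht
    · have hs : s ≠ 0 := fun hs => hst ⟨hs, rfl⟩
      have : 0 < s^2 := by positivity
      nlinarith
    · have ht2 : 0 < t^2 := by positivity
      nlinarith [sq_nonneg (2 * A * s + B * t), mul_pos (sub_pos.mpr hD) ht2]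

section SymmetricMatrix

variable {n : Type*} [Fintype n] {V : Matrix n n ℝ}

theorem Matrix.IsSymm.sum_mul_apply_swap (hV : V.IsSymm) :
    ∑ i, ∑ j, V i j * V j i = ∑ i, ∑ j, V i j ^ 2 := by
  simp only [hV.apply, sq]

theorem Matrix.sq_trace_le_card_mul_sum_sq (V : Matrix n n ℝ) :
    V.trace ^ 2 ≤ Fintype.card n * ∑ i, ∑ j, V i j ^ 2 := by
  calc V.trace ^ 2 ≤ Fintype.card n * ∑ i, V i i ^ 2 := sq_sum_le_card_mul_sum_sq
    _ ≤ Fintype.card n * ∑ i, ∑ j, V i j ^ 2 := by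
      gcongr with i
      exact Finset.single_le_sum (f := fun j => V i j ^ 2) (fun _ _ => sq_nonneg _)
        (Finset.mem_univ i)

theorem Matrix.sum_sq_pos_of_ne_zero (hV : V ≠ 0) : 0 < ∑ i, ∑ j, V i j ^ 2 := by
  obtain ⟨i, j, hij⟩ : ∃ i j, V i j ≠ 0 := by
    by_contra! h
    exact hV (Matrix.ext h)
  refine Finset.sum_pos' (fun _ _ => by positivity) ⟨i, Finset.mem_univ _, ?_⟩
  exact Finset.sum_pos' (fun _ _ => by positivity) ⟨j, Finset.mem_univ _, by positivity⟩

theorem Matrix.sum_diagonal_mul_apply_swap [DecidableEq n] (d : n → ℝ) :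
    ∑ i, ∑ j, diagonal d i j * diagonal d j i = ∑ i, d i ^ 2 := by
  simp [diagonal_apply, sq]

end SymmetricMatrix

noncomputable def Gtilde (lam mu α k : ℝ) (V : Matrix (Fin 3) (Fin 3) ℝ) (t : ℝ) : ℝ :=
  -(lam/2) * V.trace^2 - mu * (∑ i, ∑ j, V i j * V j i) - α * V.trace * t - (1/2) * k * t^2

section Gtilde

variable (lam mu α k : ℝ)

def GtildePosDef : Prop :=
  ∀ (V : Matrix (Fin 3) (Fin 3) ℝ) (t : ℝ), V.IsSymm → ¬(V = 0 ∧ t = 0) → 0 < Gtilde lam mu α k V t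

variable {lam mu α k}

theorem Gtilde_eq_of_isSymm {V : Matrix (Fin 3) (Fin 3) ℝ} (hV : V.IsSymm) (t : ℝ) :
    Gtilde lam mu α k V t = -mu * (∑ i, ∑ j, V i j ^ 2 - V.trace^2 / 3) +
      (-(3*lam + 2*mu)/6 * V.trace^2 + -α * V.trace * t + -k/2 * t^2) := by
  rw [Gtilde, hV.sum_mul_apply_swap]
  ring

theorem Gtilde_diagonal (a b c t : ℝ) :
    Gtilde lam mu α k (diagonal ![a, b, c]) t =
      -(lam/2) * (a + b + c)^2 - mu * (a^2 + b^2 + c^2) - α * (a + b + c) * t - (1/2) * k * t^2 := by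
  rw [Gtilde, trace_diagonal, sum_diagonal_mul_apply_swap]
  simp [Fin.sum_univ_three]

theorem GtildePosDef.mu_neg (H : GtildePosDef lam mu α k) : mu < 0 := by
  have hdiag := H (diagonal ![1, -1, 0]) 0 (isSymm_diagonal _) fun h => by
    simpa using congr_fun₂ h.1 0 0
  rw [Gtilde_diagonal] at hdiag
  linarith

theorem GtildePosDef.binary_pos (H : GtildePosDef lam mu α k) (s t : ℝ) (hst : ¬(s = 0 ∧ t = 0)) :
    0 < -(3*lam + 2*mu)/6 * s^2 + -α * s * t + -k/2 * t^2 := by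
  have hscalar := H (diagonal ![s / 3, s / 3, s / 3]) t (isSymm_diagonal _) fun h =>
    hst ⟨by simpa using congr_fun₂ h.1 0 0, h.2⟩
  rw [Gtilde_diagonal] at hscalar
  linarith

theorem gtildePosDef_of_binary_pos (hmu : mu < 0)
    (hbin : ∀ s t : ℝ, ¬(s = 0 ∧ t = 0) → 0 < -(3*lam + 2*mu)/6 * s^2 + -α * s * t + -k/2 * t^2) :
    GtildePosDef lam mu α k := by
  intro V t hV hVt
  have hdev : 0 ≤ ∑ i, ∑ j, V i j ^ 2 - V.trace^2 / 3 := by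
    have := V.sq_trace_le_card_mul_sum_sq
    simp only [Fintype.card_fin, Nat.cast_ofNat] at this
    linarith
  rw [Gtilde_eq_of_isSymm hV]
  by_cases hst : V.trace = 0 ∧ t = 0
  · have hV0 : V ≠ 0 := fun h => hVt ⟨h, hst.2⟩
    rw [hst.1, hst.2]
    nlinarith [sum_sq_pos_of_ne_zero hV0]
  · nlinarith [hbin _ _ hst, mul_nonneg (neg_nonneg.mpr hmu.le) hdev]

end Gtilde

theorem stmt_2_general (lamT muT α47 a44 γ β : ℝ) :
    (∀ (V : Matrix (Fin 3) (Fin 3) ℝ) (t : ℝ), V.IsSymm → ¬(V = 0 ∧ t = 0) →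
      0 < -(lamT/2) * (V.trace)^2 - muT * (∑ i, ∑ j, V i j * V j i)
          - α47 * V.trace * t - (1/2) * (a44 + γ/β^2) * t^2) ↔
    (muT < 0 ∧ 3*lamT + 2*muT < 0 ∧ a44 + γ/β^2 < 0 ∧
      (3*lamT + 2*muT) * (a44 + γ/β^2) > 3 * α47^2) := by
  change GtildePosDef lamT muT α47 (a44 + γ/β^2) ↔ _
  generalize a44 + γ/β^2 = k
  have binary_iff : (∀ s t : ℝ, ¬(s = 0 ∧ t = 0) →
        0 < -(3*lamT + 2*muT)/6 * s^2 + -α47 * s * t + -k/2 * t^2) ↔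
      3*lamT + 2*muT < 0 ∧ k < 0 ∧ (3*lamT + 2*muT) * k > 3 * α47^2 := by
    rw [binary_quadratic_pos_iff]
    constructor <;> rintro ⟨h₁, h₂, h₃⟩ <;> refine ⟨by linarith, by linarith, by nlinarith⟩
  rw [← binary_iff]
  exact ⟨fun H => ⟨H.mu_neg, H.binary_pos⟩, fun ⟨hmu, hbin⟩ => gtildePosDef_of_binary_pos hmu hbin⟩

theorem stmt_2 (lamT muT α47 a44 γ β : ℝ) (hβ : β ≠ 0) :
    (∀ (V : Matrix (Fin 3) (Fin 3) ℝ) (t : ℝ), V.IsSymm → ¬(V = 0 ∧ t = 0) →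
      0 < -(lamT/2) * (V.trace)^2 - muT * (∑ i, ∑ j, V i j * V j i)
          - α47 * V.trace * t - (1/2) * (a44 + γ/β^2) * t^2) ↔
    (muT < 0 ∧ 3*lamT + 2*muT < 0 ∧ a44 + γ/β^2 < 0 ∧
      (3*lamT + 2*muT) * (a44 + γ/β^2) > 3 * α47^2) :=
  stmt_2_general lamT muT α47 a44 γ β
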